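/- Let V be a symplectic space of dimension 2n over F_q and fix a 2-dimensional non-degenerate subspace S. Then the number of 2-dimensional non-degenerate subspaces W with dim(S + W) = 3 equals (q^{2n-2} − 1)(q + 1). -/

import Mathlib

/-!
Intersecting with `S` sends each such `W` to a line `L = S ⊓ W` of `S`, and `S` has `q + 1`
lines. Fix a line `L = K ∙ l`. For an alternating form, `span {l, w}` is nondegenerate exactly
when `Ψ l w ≠ 0`, so the planes over `L` are the `span {l, w}` with `w ∉ S` and `Ψ l w ≠ 0`,
each plane arising from the `q² - q` vectors it has outside `L`. As `S` is nondegenerate,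
`Ψ l` is a nonzero functional already on `S`, so there are
`(q^{2n} - q^{2n-1}) - (q² - q) = (q^{2n-2} - 1)(q² - q)` such `w`.
-/

open Module Submodule
open scoped LinearAlgebra.Projectivization

theorem Nat.card_eq_card_mul_of_card_fiber_eq {α β : Type*} [Finite α] [Finite β] (f : α → β)
    {k : ℕ} (h : ∀ b, Nat.card {a // f a = b} = k) : Nat.card α = Nat.card β * k := by
  have := Fintype.ofFinite β
  rw [← Nat.card_congr (Equiv.sigmaFiberEquiv f), Nat.card_sigma]
  simp [h, mul_comm]

theorem Submodule.card_lines_le_eq_card_projectivization {K V : Type*} [DivisionRing K]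
    [AddCommGroup V] [Module K V] (S : Submodule K V) :
    Nat.card {L : Submodule K V // L ≤ S ∧ finrank K L = 1} = Nat.card (ℙ K S) := by
  rw [Nat.card_congr (Projectivization.equivSubmodule K S)]
  refine Nat.card_congr (((MapSubtype.orderIso S).toEquiv.subtypeEquiv fun H => ?_).trans
    (Equiv.subtypeSubtypeEquivSubtypeInter _ _)).symm
  change _ ↔ finrank K (H.map S.subtype) = 1
  rw [finrank_map_subtype_eq]

section SpanPair

variable {K V : Type*} [Field K] [AddCommGroup V] [Module K V] {l w : V}

theorem Submodule.inf_span_pair_eq_span_singleton {S : Submodule K V} (hlS : l ∈ S)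
    (hwS : w ∉ S) : S ⊓ span K {l, w} = K ∙ l := by
  have hw : w ≠ 0 := by rintro rfl; exact hwS S.zero_mem
  rw [span_insert, sup_comm, ← inf_sup_assoc_of_le _ ((span_singleton_le_iff_mem _ _).2 hlS),
    disjoint_iff.1 ((disjoint_span_singleton' hw).2 hwS), bot_sup_eq]

variable [FiniteDimensional K V]

theorem Submodule.finrank_span_pair (hl : l ≠ 0) (hw : w ∉ K ∙ l) :
    finrank K (span K {l, w}) = 2 := by
  rw [span_insert, finrank_sup_span_singleton hw, finrank_span_singleton hl]

theorem Submodule.span_pair_eq_iff {W : Submodule K V} (hW : finrank K W = 2) (hl : l ≠ 0)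
    (hlW : l ∈ W) : span K {l, w} = W ↔ w ∈ W ∧ w ∉ K ∙ l := by
  constructor
  · rintro rfl
    refine ⟨subset_span (by simp), fun hw => ?_⟩
    rw [span_insert, sup_eq_left.2 ((span_singleton_le_iff_mem _ _).2 hw),
      finrank_span_singleton hl] at hW
    omega
  · rintro ⟨hwW, hw⟩
    refine eq_of_le_of_finrank_eq ?_ (by rw [finrank_span_pair hl hw, hW])
    exact span_le.2 (Set.insert_subset_iff.2 ⟨hlW, Set.singleton_subset_iff.2 hwW⟩)

end SpanPair

theorem LinearMap.BilinForm.IsAlt.nondegenerate_restrict_span_pair_iff {K V : Type*} [Field K]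
    [AddCommGroup V] [Module K V] {Ψ : LinearMap.BilinForm K V} (hΨ : Ψ.IsAlt) {l w : V}
    (hl : l ≠ 0) : (Ψ.restrict (span K {l, w})).Nondegenerate ↔ Ψ l w ≠ 0 := by
  have hlW : l ∈ span K {l, w} := subset_span (by simp)
  have hwW : w ∈ span K {l, w} := subset_span (by simp)
  refine (IsRefl.nondegenerate_iff_separatingLeft fun x y h => hΨ.isRefl x.1 y.1 h).trans ?_
  constructor
  · intro hsep hlw
    refine hl (congrArg Subtype.val (hsep ⟨l, hlW⟩ fun y => ?_))
    obtain ⟨a, c, hy⟩ := mem_span_pair.1 y.2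
    change Ψ l y = 0
    rw [← hy, map_add, map_smul, map_smul, hΨ.self_eq_zero, hlw, smul_zero, smul_zero, add_zero]
  · intro hlw x hx
    obtain ⟨a, c, hac⟩ := mem_span_pair.1 x.2
    have hxl : Ψ x l = 0 := hx ⟨l, hlW⟩
    have hxw : Ψ x w = 0 := hx ⟨w, hwW⟩
    rw [← hac] at hxl hxw
    simp only [map_add, map_smul, LinearMap.add_apply, LinearMap.smul_apply, smul_eq_mul,
      hΨ.self_eq_zero, ← hΨ.neg_eq l w] at hxl hxw
    have hc : c = 0 := by simpa [hlw] using hxl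
    have ha : a = 0 := by simpa [hlw] using hxw
    ext
    simp [← hac, ha, hc]

section FiniteField

variable {K V : Type*} [Field K] [Finite K] [AddCommGroup V] [Module K V] [FiniteDimensional K V]

theorem Submodule.card_diff_of_le {U U' : Submodule K V} (h : U' ≤ U) :
    Nat.card ↥((U : Set V) \ U') = Nat.card K ^ finrank K U - Nat.card K ^ finrank K U' := by
  have := Module.finite_of_finite K (M := V)
  rw [Nat.card_coe_set_eq, Set.ncard_sdiff (by exact_mod_cast h), ← Nat.card_coe_set_eq,
    ← Nat.card_coe_set_eq]
  exact congr_arg₂ _ (natCard_eq_pow_finrank (K := K)) (natCard_eq_pow_finrank (K := K))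

theorem Module.Dual.card_setOf_ne_zero {f : Dual K V} (hf : f ≠ 0) :
    Nat.card {x | f x ≠ 0} = Nat.card K ^ finrank K V - Nat.card K ^ (finrank K V - 1) := by
  have hset : {x | f x ≠ 0} = ((⊤ : Submodule K V) : Set V) \ LinearMap.ker f := by ext; simp
  rw [hset, card_diff_of_le le_top, finrank_top, ← f.finrank_ker_add_one_of_ne_zero hf,
    Nat.add_sub_cancel]

theorem Module.Dual.card_setOf_ne_zero_diff {f : Dual K V} {S : Submodule K V}
    (hf : f.domRestrict S ≠ 0) :
    Nat.card ↥({x | f x ≠ 0} \ S) =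
      (Nat.card K ^ finrank K V - Nat.card K ^ (finrank K V - 1)) -
        (Nat.card K ^ finrank K S - Nat.card K ^ (finrank K S - 1)) := by
  have := Module.finite_of_finite K (M := V)
  have hinter : {x | f x ≠ 0} ∩ S = S.subtype '' {x | f.domRestrict S x ≠ 0} := by
    ext x
    constructor
    · rintro ⟨hx, hxS⟩
      exact ⟨⟨x, hxS⟩, hx, rfl⟩
    · rintro ⟨x, hx, rfl⟩
      exact ⟨hx, x.2⟩
  have hsplit := Set.ncard_inter_add_ncard_sdiff_eq_ncard {x | f x ≠ 0} (S : Set V)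
  rw [hinter, Set.ncard_image_of_injective _ S.subtype_injective] at hsplit
  simp only [← Nat.card_coe_set_eq] at hsplit
  rw [← card_setOf_ne_zero hf, ← card_setOf_ne_zero (f := f) fun h => hf (by rw [h]; rfl)]
  omega

namespace LinearMap.BilinForm.IsAlt

variable {Ψ : LinearMap.BilinForm K V} {S : Submodule K V} {l : V}

theorem card_planes_inf_eq_span_mul (hΨ : Ψ.IsAlt) (hlS : l ∈ S) (hl : l ≠ 0) :
    Nat.card {W : Submodule K V //
        finrank K W = 2 ∧ (Ψ.restrict W).Nondegenerate ∧ S ⊓ W = K ∙ l} *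
      (Nat.card K ^ 2 - Nat.card K) = Nat.card ↥({w | Ψ l w ≠ 0} \ S) := by
  have := Module.finite_of_finite K (M := V)
  have hnotMem {w : V} (hwS : w ∉ S) : w ∉ K ∙ l :=
    fun hw => hwS ((span_singleton_le_iff_mem _ _).2 hlS hw)
  let plane (w : ↥({w | Ψ l w ≠ 0} \ S)) : {W : Submodule K V //
      finrank K W = 2 ∧ (Ψ.restrict W).Nondegenerate ∧ S ⊓ W = K ∙ l} :=
    ⟨span K {l, (w : V)}, finrank_span_pair hl (hnotMem w.2.2),
      (hΨ.nondegenerate_restrict_span_pair_iff hl).2 w.2.1,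
      inf_span_pair_eq_span_singleton hlS w.2.2⟩
  refine (Nat.card_eq_card_mul_of_card_fiber_eq plane fun W => ?_).symm
  obtain ⟨W, hW2, hWnd, hSW⟩ := W
  have hlW : l ∈ W := (hSW ▸ inf_le_right : K ∙ l ≤ W) (mem_span_singleton_self l)
  have hfiber : {w // plane w = ⟨W, hW2, hWnd, hSW⟩} ≃ ↥((W : Set V) \ (K ∙ l)) :=
    (Equiv.subtypeSubtypeEquivSubtypeExists _ _).trans <| Equiv.subtypeEquivRight fun w => by
      have hspan := span_pair_eq_iff (w := w) hW2 hl hlW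
      constructor
      · rintro ⟨_, h⟩
        exact hspan.1 (congrArg Subtype.val h)
      · intro h
        have hw : span K {l, w} = W := hspan.2 h
        refine ⟨⟨(hΨ.nondegenerate_restrict_span_pair_iff hl).1 (hw ▸ hWnd), fun hwS => h.2 ?_⟩,
          Subtype.ext hw⟩
        exact hSW ▸ ⟨hwS, h.1⟩
  rw [Nat.card_congr hfiber, card_diff_of_le ((span_singleton_le_iff_mem _ _).2 hlW), hW2,
    finrank_span_singleton hl, pow_one]

theorem card_planes_inf_eq_span (hΨ : Ψ.IsAlt) (hS2 : finrank K S = 2)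
    (hSnd : (Ψ.restrict S).Nondegenerate) (hlS : l ∈ S) (hl : l ≠ 0) :
    Nat.card {W : Submodule K V //
        finrank K W = 2 ∧ (Ψ.restrict W).Nondegenerate ∧ S ⊓ W = K ∙ l} =
      Nat.card K ^ (finrank K V - 2) - 1 := by
  have hΨl : (Ψ l).domRestrict S ≠ 0 := fun h =>
    hl (congrArg Subtype.val (hSnd.1 ⟨l, hlS⟩ fun y => LinearMap.congr_fun h y))
  obtain ⟨m, hm⟩ : ∃ m, finrank K V = m + 2 := ⟨finrank K V - 2, by have := S.finrank_le; omega⟩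
  have hcard := hΨ.card_planes_inf_eq_span_mul hlS hl
  rw [Module.Dual.card_setOf_ne_zero_diff hΨl, hS2, hm] at hcard
  set q := Nat.card K
  have hq : q < q ^ 2 := by
    have : 1 < q := Finite.one_lt_card
    nlinarith
  refine Nat.eq_of_mul_eq_mul_right (m := q ^ 2 - q) (by omega) (hcard.trans ?_)
  rw [hm, Nat.add_sub_cancel, Nat.sub_one_mul, Nat.mul_sub, ← pow_add, ← pow_succ]
  simp

end LinearMap.BilinForm.IsAlt

end FiniteField

theorem stmt_7_general {K V : Type*} [Field K] [Fintype K] [AddCommGroup V] [Module K V]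
    (q n : ℕ) (hq : Fintype.card K = q) (hn : 2 ≤ n)
    (hV : Module.finrank K V = 2 * n)
    (Ψ : LinearMap.BilinForm K V) (hΨ : Ψ.IsAlt)
    (S : Submodule K V) (hS2 : Module.finrank K S = 2)
    (hSnd : (Ψ.restrict S).Nondegenerate) :
    Nat.card {W : Submodule K V //
        Module.finrank K W = 2 ∧ (Ψ.restrict W).Nondegenerate ∧
        Module.finrank K ↥(S ⊔ W) = 3} =
      (q ^ (2 * n - 2) - 1) * (q + 1) := by
  have : FiniteDimensional K V := Module.finite_of_finrank_pos (by omega)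
  have := Module.finite_of_finite K (M := V)
  have : Finite (Submodule K V) := Finite.of_injective _ SetLike.coe_injective
  have hK : Nat.card K = q := by rw [Nat.card_eq_fintype_card, hq]
  have hsup {W : Submodule K V} (hW : finrank K W = 2) :
      finrank K ↥(S ⊔ W) = 3 ↔ finrank K ↥(S ⊓ W) = 1 := by
    have := finrank_sup_add_finrank_inf_eq S W
    omega
  let meet (W : {W : Submodule K V //
      finrank K W = 2 ∧ (Ψ.restrict W).Nondegenerate ∧ finrank K ↥(S ⊔ W) = 3}) :
      {L : Submodule K V // L ≤ S ∧ finrank K L = 1} :=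
    ⟨S ⊓ W, inf_le_left, (hsup W.2.1).1 W.2.2.2⟩
  rw [Nat.card_eq_card_mul_of_card_fiber_eq meet fun L => ?_,
    card_lines_le_eq_card_projectivization, Projectivization.card_of_finrank_two K S hS2, hK,
    mul_comm]
  obtain ⟨L, hLS, hL⟩ := L
  obtain ⟨l, hl, rfl⟩ : ∃ l, l ≠ 0 ∧ L = K ∙ l := ⟨_, (Projectivization.mk'' L hL).rep_nonzero,
    by rw [← Projectivization.submodule_eq, Projectivization.submodule_mk'']⟩
  rw [← hK, ← hV, ← hΨ.card_planes_inf_eq_span hS2 hSnd (hLS (mem_span_singleton_self l)) hl]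
  refine Nat.card_congr <| (Equiv.subtypeSubtypeEquivSubtypeExists _ _).trans <|
    Equiv.subtypeEquivRight fun W => ⟨fun ⟨h, hmeet⟩ => ⟨h.1, h.2.1, congrArg Subtype.val hmeet⟩,
      fun ⟨hW2, hWnd, hSW⟩ => ⟨⟨hW2, hWnd, (hsup hW2).2 ?_⟩, Subtype.ext hSW⟩⟩
  rw [hSW, finrank_span_singleton hl]

theorem stmt_7 {K V : Type*} [Field K] [Fintype K] [AddCommGroup V] [Module K V]
    (q n : ℕ) (hq : Fintype.card K = q) (hn : 2 ≤ n)
    (hV : Module.finrank K V = 2 * n)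
    (Ψ : LinearMap.BilinForm K V) (hΨ : Ψ.IsAlt) (hnd : Ψ.Nondegenerate)
    (S : Submodule K V) (hS2 : Module.finrank K S = 2)
    (hSnd : (Ψ.restrict S).Nondegenerate) :
    Nat.card {W : Submodule K V //
        Module.finrank K W = 2 ∧ (Ψ.restrict W).Nondegenerate ∧
        Module.finrank K ↥(S ⊔ W) = 3} =
      (q ^ (2 * n - 2) - 1) * (q + 1) :=
  stmt_7_general q n hq hn hV Ψ hΨ S hS2 hSnd
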